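/- arXiv:2110.09469 — 2 statements merged into one kernel-verified Lean document; each statement's English description precedes it below -/
import Mathlib

section
/- The trace distance between the density matrices ρ₀ = p|0⟩⟨0| + (1-p)|+⟩⟨+| and ρ₁ = p|1⟩⟨1| + (1-p)|−⟩⟨−| equals √(p² + (1-p)²), where |±⟩ = (|0⟩ ± |1⟩)/√2. -/
open Matrix

/-- `ρ₀ = p|0⟩⟨0| + (1-p)|+⟩⟨+|` as a 2×2 complex matrix. -/
noncomputable def rho0 (p : ℝ) : Matrix (Fin 2) (Fin 2) ℂ :=
  (p : ℂ) • !![1, 0; 0, 0] + ((1 - p : ℝ) : ℂ) • !![1/2, 1/2; 1/2, 1/2]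

/-- `ρ₁ = p|1⟩⟨1| + (1-p)|−⟩⟨−|` as a 2×2 complex matrix. -/
noncomputable def rho1 (p : ℝ) : Matrix (Fin 2) (Fin 2) ℂ :=
  (p : ℂ) • !![0, 0; 0, 1] + ((1 - p : ℝ) : ℂ) • !![1/2, -(1/2); -(1/2), 1/2]

/-! `ρ₀ - ρ₁` is a traceless Hermitian 2×2 matrix, so its eigenvalues are `±λ` with
`λ² = -det (ρ₀ - ρ₁) = p² + (1-p)²`, and the trace distance is `|λ|`. -/

theorem Matrix.IsHermitian.sum_abs_eigenvalues_of_trace_eq_zero {𝕜 : Type*} [RCLike 𝕜]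
    {A : Matrix (Fin 2) (Fin 2) 𝕜} (hA : A.IsHermitian) (htr : A.trace = 0) :
    ∑ i, |hA.eigenvalues i| = 2 * √(-RCLike.re A.det) := by
  have hsum : hA.eigenvalues 0 + hA.eigenvalues 1 = 0 := by
    have := hA.trace_eq_sum_eigenvalues
    rw [htr, Fin.sum_univ_two] at this
    exact_mod_cast this.symm
  have hprod : RCLike.re A.det = hA.eigenvalues 0 * hA.eigenvalues 1 := by
    rw [hA.det_eq_prod_eigenvalues, Fin.prod_univ_two]
    exact_mod_cast RCLike.ofReal_re (K := 𝕜) _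
  have hneg : hA.eigenvalues 1 = -hA.eigenvalues 0 := by linarith
  rw [Fin.sum_univ_two, hprod, hneg, abs_neg, mul_neg, neg_neg, ← sq, Real.sqrt_sq_eq_abs]
  ring

lemma rho0_sub_rho1 (p : ℝ) :
    rho0 p - rho1 p = !![(p : ℂ), ((1 - p : ℝ) : ℂ); ((1 - p : ℝ) : ℂ), -(p : ℂ)] := by
  ext i j
  fin_cases i <;> fin_cases j <;> simp [rho0, rho1] <;> ring

lemma trace_rho0_sub_rho1 (p : ℝ) : (rho0 p - rho1 p).trace = 0 := by
  simp [rho0_sub_rho1, trace_fin_two]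

lemma det_rho0_sub_rho1 (p : ℝ) :
    (rho0 p - rho1 p).det = -((p ^ 2 + (1 - p) ^ 2 : ℝ) : ℂ) := by
  rw [rho0_sub_rho1, det_fin_two_of]
  push_cast
  ring

theorem trace_distance_rho0_rho1_general (p : ℝ)
    (h : (rho0 p - rho1 p).IsHermitian) :
    (1/2) * ∑ i, |h.eigenvalues i| = Real.sqrt (p ^ 2 + (1 - p) ^ 2) := by
  rw [h.sum_abs_eigenvalues_of_trace_eq_zero (trace_rho0_sub_rho1 p), det_rho0_sub_rho1,
    map_neg, neg_neg, RCLike.re_to_complex, Complex.ofReal_re]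
  ring

/-- The trace distance `(1/2)·∑|eigenvalues of ρ₀ - ρ₁|` equals `√(p² + (1-p)²)`
for `p ∈ [1/2, 1]`. -/
theorem trace_distance_rho0_rho1 (p : ℝ) (hp : 1/2 ≤ p) (hp1 : p ≤ 1)
    (h : (rho0 p - rho1 p).IsHermitian) :
    (1/2) * ∑ i, |h.eigenvalues i| = Real.sqrt (p ^ 2 + (1 - p) ^ 2) :=
  trace_distance_rho0_rho1_general p h
end

section
/- For two density matrices ρ₀, ρ₁ given with prior probabilities p and 1-p respectively, the optimal success probability of distinguishing them satisfies max over POVM elements 0 ≤ E ≤ I of [p·Tr(Eρ₀) + (1-p)·Tr((I-E)ρ₁)] = 1/2 + (1/2)·‖pρ₀ - (1-p)ρ₁‖₁, where ‖·‖₁ is the trace norm (Helstrom bound). -/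
open Matrix
open scoped ComplexOrder

lemma psd_diag_re_nonneg {n : ℕ} {F : Matrix (Fin n) (Fin n) ℂ} (hF : F.PosSemidef) (i : Fin n) :
    0 ≤ (F i i).re := by
  have := hF.re_dotProduct_nonneg (Pi.single i 1)
  simpa [dotProduct, mulVec, Pi.single_apply] using this

lemma value_eq {n : ℕ} (ρ0 ρ1 : Matrix (Fin n) (Fin n) ℂ) (p : ℝ)
    (ht1 : ρ1.trace = 1) (E : Matrix (Fin n) (Fin n) ℂ) :
    p * (E * ρ0).trace.re + (1 - p) * (((1 : Matrix (Fin n) (Fin n) ℂ) - E) * ρ1).trace.re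
      = (1 - p) + (E * ((p : ℂ) • ρ0 - ((1 - p : ℝ) : ℂ) • ρ1)).trace.re := by
  have h1 : (((1 : Matrix (Fin n) (Fin n) ℂ) - E) * ρ1).trace = 1 - (E * ρ1).trace := by
    rw [Matrix.sub_mul, Matrix.one_mul, trace_sub, ht1]
  have h2 : (E * ((p : ℂ) • ρ0 - ((1 - p : ℝ) : ℂ) • ρ1)).trace
      = (p : ℂ) * (E * ρ0).trace - ((1 - p : ℝ) : ℂ) * (E * ρ1).trace := by
    rw [Matrix.mul_sub, trace_sub, Matrix.mul_smul, Matrix.mul_smul, trace_smul, trace_smul,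
      smul_eq_mul, smul_eq_mul]
  rw [h1, h2]
  simp [Complex.sub_re, Complex.re_ofReal_mul]
  ring

/-- Helstrom bound: for density matrices `ρ₀, ρ₁` with priors `p` and `1-p`, the optimal
success probability of discrimination over POVM elements `0 ≤ E ≤ I` is
`1/2 + (1/2)·‖p ρ₀ - (1-p) ρ₁‖₁`, the trace norm being the sum of the absolute values of
the eigenvalues of the Hermitian matrix `p ρ₀ - (1-p) ρ₁`. -/
theorem helstrom_bound (n : ℕ) (ρ0 ρ1 : Matrix (Fin n) (Fin n) ℂ)
    (p : ℝ) (hp0 : 0 ≤ p) (hp1 : p ≤ 1)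
    (h0 : ρ0.PosSemidef) (ht0 : ρ0.trace = 1)
    (h1 : ρ1.PosSemidef) (ht1 : ρ1.trace = 1)
    (hΔ : ((p : ℂ) • ρ0 - ((1 - p : ℝ) : ℂ) • ρ1).IsHermitian) :
    IsGreatest
      { x : ℝ | ∃ E : Matrix (Fin n) (Fin n) ℂ, E.PosSemidef ∧ ((1 : Matrix (Fin n) (Fin n) ℂ) - E).PosSemidef ∧
          x = p * (E * ρ0).trace.re + (1 - p) * (((1 : Matrix (Fin n) (Fin n) ℂ) - E) * ρ1).trace.re }
      (1/2 + (1/2) * ∑ i, |hΔ.eigenvalues i|) := by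
  set Δ : Matrix (Fin n) (Fin n) ℂ := (p : ℂ) • ρ0 - ((1 - p : ℝ) : ℂ) • ρ1 with hΔdef
  set V : Matrix (Fin n) (Fin n) ℂ := (hΔ.eigenvectorUnitary : Matrix (Fin n) (Fin n) ℂ) with hVdef
  set lam : Fin n → ℝ := hΔ.eigenvalues with hlam
  have hVV : V * star V = 1 := (Matrix.mem_unitaryGroup_iff).mp hΔ.eigenvectorUnitary.2
  have hVV' : star V * V = 1 := (Matrix.mem_unitaryGroup_iff').mp hΔ.eigenvectorUnitary.2
  have hspec : Δ = V * diagonal (Complex.ofReal ∘ lam) * star V := hΔ.spectral_theorem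
  have htrconj : ∀ M : Matrix (Fin n) (Fin n) ℂ, (V * M * star V).trace = M.trace := by
    intro M
    rw [trace_mul_cycle, hVV', Matrix.one_mul]
  -- trace of Δ
  have htrace : Δ.trace = ((2 * p - 1 : ℝ) : ℂ) := by
    rw [hΔdef, trace_sub, trace_smul, trace_smul, ht0, ht1]
    simp [smul_eq_mul]
    push_cast
    ring
  have hsum : ∑ i, lam i = 2 * p - 1 := by
    have : Δ.trace = ∑ i, ((lam i : ℂ)) := by
      conv_lhs => rw [hspec]
      rw [htrconj, trace_diagonal]
      simp
    rw [htrace] at this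
    exact_mod_cast this.symm
  -- upper bound lemma
  have key : ∀ E : Matrix (Fin n) (Fin n) ℂ, E.PosSemidef →
      ((1 : Matrix (Fin n) (Fin n) ℂ) - E).PosSemidef →
      (E * Δ).trace.re ≤ ∑ i, max (lam i) 0 := by
    intro E hE hE'
    set F := star V * E * V with hF
    have hFpsd : F.PosSemidef := by
      have := hE.conjTranspose_mul_mul_same V
      rwa [← Matrix.star_eq_conjTranspose] at this
    have hF1 : ((1 : Matrix (Fin n) (Fin n) ℂ) - F).PosSemidef := by
      have := hE'.conjTranspose_mul_mul_same V
      rw [← Matrix.star_eq_conjTranspose] at this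
      have heq : star V * ((1 : Matrix (Fin n) (Fin n) ℂ) - E) * V = 1 - F := by
        rw [Matrix.mul_sub, Matrix.mul_one, Matrix.sub_mul, hVV', hF]
      rwa [heq] at this
    have htr : (E * Δ).trace = ∑ i, F i i * (lam i : ℂ) := by
      conv_lhs => rw [hspec]
      rw [← mul_assoc, ← mul_assoc, trace_mul_cycle, ← mul_assoc (star V) E V, ← hF,
        Matrix.trace]
      congr 1; ext i
      simp [Matrix.diag, Matrix.mul_diagonal]
    rw [htr]
    have hre : (∑ i, F i i * (lam i : ℂ)).re = ∑ i, (F i i).re * lam i := by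
      rw [Complex.re_sum]
      apply Finset.sum_congr rfl
      intro i _
      rw [mul_comm, Complex.re_ofReal_mul]
      ring
    rw [hre]
    apply Finset.sum_le_sum
    intro i _
    have h0F : 0 ≤ (F i i).re := psd_diag_re_nonneg hFpsd i
    have h1F : (F i i).re ≤ 1 := by
      have := psd_diag_re_nonneg hF1 i
      simp [Matrix.sub_apply, Matrix.one_apply, Complex.sub_re] at this
      linarith
    rcases le_or_gt 0 (lam i) with h | h
    · calc (F i i).re * lam i ≤ 1 * lam i := by nlinarith
        _ ≤ max (lam i) 0 := by rw [one_mul]; exact le_max_left _ _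
    · calc (F i i).re * lam i ≤ 0 := by nlinarith
        _ ≤ max (lam i) 0 := le_max_right _ _
  -- the sum of positive parts
  have habs : ∑ i, max (lam i) 0 = (∑ i, |lam i| + (2 * p - 1)) / 2 := by
    rw [← hsum, ← Finset.sum_add_distrib, Finset.sum_div]
    apply Finset.sum_congr rfl
    intro i _
    rcases le_or_gt 0 (lam i) with h | h
    · rw [abs_of_nonneg h, max_eq_left h]; linarith
    · rw [abs_of_neg h, max_eq_right h.le]; linarith
  constructor
  · -- membership: optimal projector
    set g : Fin n → ℂ := fun i => if 0 ≤ lam i then 1 else 0 with hg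
    set E : Matrix (Fin n) (Fin n) ℂ := V * diagonal g * star V with hE
    have hgpsd : (diagonal g).PosSemidef := by
      apply Matrix.PosSemidef.diagonal
      intro i
      by_cases h : 0 ≤ lam i <;> simp [hg, h]
    have hEpsd : E.PosSemidef := by
      have := hgpsd.mul_mul_conjTranspose_same V
      rwa [← Matrix.star_eq_conjTranspose] at this
    have hE1 : ((1 : Matrix (Fin n) (Fin n) ℂ) - E).PosSemidef := by
      have heq : (1 : Matrix (Fin n) (Fin n) ℂ) - E = V * diagonal (fun i => 1 - g i) * star V := by
        have hd : diagonal (fun i => 1 - (g i : ℂ)) = 1 - diagonal g := by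
          rw [← diagonal_one, diagonal_sub]
        rw [hd, Matrix.mul_sub, Matrix.mul_one, Matrix.sub_mul, hVV, hE]
      rw [heq]
      have hpsd : (diagonal (fun i => 1 - g i)).PosSemidef := by
        apply Matrix.PosSemidef.diagonal
        intro i
        by_cases h : 0 ≤ lam i <;> simp [hg, h]
      have := hpsd.mul_mul_conjTranspose_same V
      rwa [← Matrix.star_eq_conjTranspose] at this
    refine ⟨E, hEpsd, hE1, ?_⟩
    rw [value_eq ρ0 ρ1 p ht1 E]
    have hconj : E * Δ = V * (diagonal g * diagonal (Complex.ofReal ∘ lam)) * star V := by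
      rw [hE]
      conv_lhs => rw [hspec]
      simp only [Matrix.mul_assoc]
      rw [show star V * (V * (diagonal (Complex.ofReal ∘ lam) * star V))
          = diagonal (Complex.ofReal ∘ lam) * star V by
        rw [← Matrix.mul_assoc, hVV', Matrix.one_mul]]
    have htrE : (E * Δ).trace = ((∑ i, max (lam i) 0 : ℝ) : ℂ) := by
      rw [hconj, htrconj, diagonal_mul_diagonal, trace_diagonal, Complex.ofReal_sum]
      apply Finset.sum_congr rfl
      intro i _
      by_cases h : 0 ≤ lam i
      · simp [hg, h, max_eq_left h]
      · simp [hg, h, max_eq_right (le_of_not_ge h)]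
    rw [htrE, Complex.ofReal_re, habs]
    ring
  · rintro x ⟨E, hEpsd, hE1, rfl⟩
    rw [value_eq ρ0 ρ1 p ht1 E]
    have := key E hEpsd hE1
    rw [habs] at this
    linarith
end
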